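/- Let u(x, y) = (1/(2β))(log(xy/Q))² for x, y, Q, β > 0, and let σ = ∂_x ∂_y u = 1/(β x y). Then u · σ = (1/3) ∂_y(u ∂_x u), i.e., ∂_y (u ∂_x u) = 3 u σ. -/

import Mathlib

lemma log_hasDeriv_x (β Q x y' : ℝ) (hβ : 0 < β) (hQ : 0 < Q) (hx : 0 < x) (hy' : 0 < y') :
    HasDerivAt (fun x' : ℝ => (1 / (2 * β)) * Real.log (x' * y' / Q) ^ 2)
      ((1 / β) * Real.log (x * y' / Q) / x) x := by
  have h1 : HasDerivAt (fun x' : ℝ => x' * y' / Q) (y' / Q) x := by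
    simpa [mul_div_assoc] using (hasDerivAt_id x).mul_const (y' / Q)
  have hne : x * y' / Q ≠ 0 := by positivity
  have h2 := (h1.log hne)
  have h3 := (h2.fun_pow 2).const_mul (1 / (2 * β))
  refine h3.congr_deriv ?_
  field_simp
  ring

/-- For u(x,y) = (1/(2β))(log(xy/Q))², one has ∂_y(u ∂_x u) = 3 u σ,
with σ = ∂_x∂_y u = 1/(β x y). -/
theorem stmt_13 (β Q x y : ℝ) (hβ : 0 < β) (hQ : 0 < Q) (hx : 0 < x) (hy : 0 < y) :
    deriv (fun y' : ℝ =>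
        (1 / (2 * β)) * Real.log (x * y' / Q) ^ 2 *
          deriv (fun x' : ℝ => (1 / (2 * β)) * Real.log (x' * y' / Q) ^ 2) x) y
      = 3 * ((1 / (2 * β)) * Real.log (x * y / Q) ^ 2) * (1 / (β * x * y)) := by
  have hev : ∀ᶠ y' in nhds y, (fun y' : ℝ =>
        (1 / (2 * β)) * Real.log (x * y' / Q) ^ 2 *
          deriv (fun x' : ℝ => (1 / (2 * β)) * Real.log (x' * y' / Q) ^ 2) x) y'
      = (1 / (2 * β ^ 2 * x)) * Real.log (x * y' / Q) ^ 3 := by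
    filter_upwards [eventually_gt_nhds hy] with y' hy'
    rw [(log_hasDeriv_x β Q x y' hβ hQ hx hy').deriv]
    field_simp
  rw [Filter.EventuallyEq.deriv_eq hev]
  have h1 : HasDerivAt (fun y' : ℝ => x * y' / Q) (x / Q) y := by
    have heq : (fun y' : ℝ => x * y' / Q) = fun y' => x / Q * y' := by funext y'; ring
    rw [heq]
    simpa using (hasDerivAt_id y).const_mul (x / Q)
  have hne : x * y / Q ≠ 0 := by positivity
  have h3 := ((h1.log hne).fun_pow 3).const_mul (1 / (2 * β ^ 2 * x))
  rw [h3.deriv]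
  field_simp
  ring
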